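/- Let r_1, …, r_k : T → ℝ be reward functions, let w ∈ ℝ^k satisfy w_i ≥ 0 for all i and Σ_{i=1}^k w_i = 1, and set r̄(τ) = Σ_{i=1}^k w_i · r_i(τ). Then for every probability mass function π on T, Σ_{i=1}^k w_i · D(π‖p_{r_i}) = D(π‖p_{r̄}) + Σ_{i=1}^k w_i · log Z_{r_i} − log Z_{r̄}; consequently the weighted Kullback–Leibler objective Σ_{i=1}^k w_i · D(π‖p_{r_i}) is minimized over probability mass functions π exactly at π = p_{r̄}, and this minimizer is unique. -/

import Mathlib

open Real Finset

/-- Partition function `Z_r = ∑ τ, μ(τ) · exp(r(τ))`. -/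
noncomputable def Z {T : Type*} [Fintype T] (μ r : T → ℝ) : ℝ :=
  ∑ τ, μ τ * Real.exp (r τ)

/-- Gibbs distribution `p_r(τ) = μ(τ) · exp(r(τ)) / Z_r`. -/
noncomputable def gibbs {T : Type*} [Fintype T] (μ r : T → ℝ) : T → ℝ :=
  fun τ => μ τ * Real.exp (r τ) / Z μ r

/-- A probability mass function on a finite type: nonnegative and summing to 1. -/
def IsPMF {T : Type*} [Fintype T] (pi : T → ℝ) : Prop :=
  (∀ τ, 0 ≤ pi τ) ∧ ∑ τ, pi τ = 1

/-- Kullback–Leibler divergence `D(pi‖q) = ∑_{τ : pi(τ)>0} pi(τ) · log (pi(τ)/q(τ))`. -/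
noncomputable def KL {T : Type*} [Fintype T] (pi q : T → ℝ) : ℝ :=
  ∑ τ ∈ Finset.univ.filter (fun τ => 0 < pi τ), pi τ * Real.log (pi τ / q τ)

/-!
Expanding the logarithm of the Gibbs density gives, for every pmf `π`,
`D(π‖p_r) = D(π‖μ) - ∑ π r + log Z_r`, which is affine in `r`. Averaging over the weights
therefore turns `∑ wᵢ D(π‖p_{rᵢ})` into `D(π‖p_{r̄})` plus a constant, and the minimisation
statements reduce to Gibbs' inequality `D(π‖q) ≥ 0` with equality only at `π = q`.
-/

open InformationTheory

section

variable {T : Type*} [Fintype T]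

lemma Z_pos [Nonempty T] {μ : T → ℝ} (hμ : ∀ τ, 0 < μ τ) (r : T → ℝ) : 0 < Z μ r :=
  sum_pos (fun τ _ => mul_pos (hμ τ) (exp_pos _)) univ_nonempty

lemma gibbs_pos [Nonempty T] {μ : T → ℝ} (hμ : ∀ τ, 0 < μ τ) (r : T → ℝ) (τ : T) :
    0 < gibbs μ r τ :=
  div_pos (mul_pos (hμ τ) (exp_pos _)) (Z_pos hμ r)

lemma isPMF_gibbs [Nonempty T] {μ : T → ℝ} (hμ : ∀ τ, 0 < μ τ) (r : T → ℝ) :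
    IsPMF (gibbs μ r) :=
  ⟨fun τ => (gibbs_pos hμ r τ).le, by unfold gibbs; rw [← sum_div, ← Z, div_self (Z_pos hμ r).ne']⟩

lemma KL_eq_sum {pi : T → ℝ} (hpi : ∀ τ, 0 ≤ pi τ) (q : T → ℝ) :
    KL pi q = ∑ τ, pi τ * log (pi τ / q τ) :=
  sum_filter_of_ne fun τ _ hτ => (hpi τ).lt_of_ne' (left_ne_zero_of_mul hτ)

/-- `klFun x = x log x + 1 - x`, so for pmfs the `+ 1 - x` terms cancel after summation. -/
lemma KL_eq_sum_mul_klFun {pi q : T → ℝ} (hpi : IsPMF pi) (hq : IsPMF q) (hq_pos : ∀ τ, 0 < q τ) :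
    KL pi q = ∑ τ, q τ * klFun (pi τ / q τ) := by
  have hterm : ∀ τ, q τ * klFun (pi τ / q τ) = pi τ * log (pi τ / q τ) + (q τ - pi τ) := by
    intro τ
    rw [klFun_apply]
    field_simp [(hq_pos τ).ne']
    ring
  simp only [hterm, sum_add_distrib, sum_sub_distrib, hpi.2, hq.2, sub_self, add_zero,
    KL_eq_sum hpi.1]

lemma KL_nonneg {pi q : T → ℝ} (hpi : IsPMF pi) (hq : IsPMF q) (hq_pos : ∀ τ, 0 < q τ) :
    0 ≤ KL pi q := by
  rw [KL_eq_sum_mul_klFun hpi hq hq_pos]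
  exact sum_nonneg fun τ _ =>
    mul_nonneg (hq_pos τ).le (klFun_nonneg (div_nonneg (hpi.1 τ) (hq_pos τ).le))

lemma eq_of_KL_eq_zero {pi q : T → ℝ} (hpi : IsPMF pi) (hq : IsPMF q) (hq_pos : ∀ τ, 0 < q τ)
    (h : KL pi q = 0) : pi = q := by
  have hratio_nonneg : ∀ τ, 0 ≤ pi τ / q τ := fun τ => div_nonneg (hpi.1 τ) (hq_pos τ).le
  rw [KL_eq_sum_mul_klFun hpi hq hq_pos, sum_eq_zero_iff_of_nonneg fun τ _ =>
    mul_nonneg (hq_pos τ).le (klFun_nonneg (hratio_nonneg τ))] at h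
  funext τ
  have hklFun : klFun (pi τ / q τ) = 0 :=
    (mul_eq_zero.1 (h τ (mem_univ τ))).resolve_left (hq_pos τ).ne'
  exact (div_eq_one_iff_eq (hq_pos τ).ne').1 ((klFun_eq_zero_iff (hratio_nonneg τ)).1 hklFun)

lemma KL_gibbs [Nonempty T] {μ : T → ℝ} (hμ : ∀ τ, 0 < μ τ) (r : T → ℝ) {pi : T → ℝ}
    (hpi : IsPMF pi) :
    KL pi (gibbs μ r) = KL pi μ - ∑ τ, pi τ * r τ + log (Z μ r) := by
  have hterm : ∀ τ, pi τ * log (pi τ / gibbs μ r τ) =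
      pi τ * log (pi τ / μ τ) - pi τ * r τ + pi τ * log (Z μ r) := by
    intro τ
    rcases (hpi.1 τ).eq_or_lt with h0 | hpos
    · simp [← h0]
    rw [gibbs, div_div_eq_mul_div, log_div (mul_pos hpos (Z_pos hμ r)).ne'
        (mul_pos (hμ τ) (exp_pos _)).ne', log_mul hpos.ne' (Z_pos hμ r).ne',
      log_mul (hμ τ).ne' (exp_pos _).ne', log_exp, log_div hpos.ne' (hμ τ).ne']
    ring
  simp only [KL_eq_sum hpi.1, hterm, sum_add_distrib, sum_sub_distrib, ← sum_mul, hpi.2, one_mul]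

lemma sum_mul_KL_gibbs [Nonempty T] {μ : T → ℝ} (hμ : ∀ τ, 0 < μ τ) {ι : Type*} [Fintype ι]
    (r : ι → T → ℝ) {w : ι → ℝ} (hw : ∑ i, w i = 1) {pi : T → ℝ} (hpi : IsPMF pi) :
    ∑ i, w i * KL pi (gibbs μ (r i)) =
      KL pi (gibbs μ fun τ => ∑ i, w i * r i τ) + ∑ i, w i * log (Z μ (r i)) -
        log (Z μ fun τ => ∑ i, w i * r i τ) := by
  have hmix : ∑ i, w i * ∑ τ, pi τ * r i τ = ∑ τ, pi τ * ∑ i, w i * r i τ := by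
    simp only [mul_sum]
    rw [sum_comm]
    exact sum_congr rfl fun τ _ => sum_congr rfl fun i _ => by ring
  simp only [KL_gibbs hμ _ hpi, mul_add, mul_sub, sum_add_distrib, sum_sub_distrib, ← sum_mul,
    hw, one_mul, hmix]
  ring

end

theorem weighted_kl_eq_kl_mix_and_unique_min_general {T : Type*} [Fintype T] [Nonempty T]
    (μ : T → ℝ) (hμ : ∀ τ, 0 < μ τ)
    (k : ℕ) (r : Fin k → T → ℝ) (w : Fin k → ℝ)
    (hw1 : ∑ i, w i = 1)
    (rbar : T → ℝ) (hrbar : ∀ τ, rbar τ = ∑ i, w i * r i τ) :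
    (∀ pi : T → ℝ, IsPMF pi →
        ∑ i, w i * KL pi (gibbs μ (r i)) =
          KL pi (gibbs μ rbar) + (∑ i, w i * Real.log (Z μ (r i))) - Real.log (Z μ rbar))
    ∧
    (∀ pi : T → ℝ, IsPMF pi →
        ∑ i, w i * KL (gibbs μ rbar) (gibbs μ (r i)) ≤ ∑ i, w i * KL pi (gibbs μ (r i)))
    ∧
    (∀ pi : T → ℝ, IsPMF pi →
        ∑ i, w i * KL pi (gibbs μ (r i)) =
          ∑ i, w i * KL (gibbs μ rbar) (gibbs μ (r i)) → pi = gibbs μ rbar) := by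
  obtain rfl : rbar = fun τ => ∑ i, w i * r i τ := funext hrbar
  have hdecomp := fun pi (hpi : IsPMF pi) => sum_mul_KL_gibbs hμ r hw1 hpi
  have hpbar := isPMF_gibbs hμ (fun τ => ∑ i, w i * r i τ)
  have hpbar_pos := gibbs_pos hμ (fun τ => ∑ i, w i * r i τ)
  have hKL_self : KL (gibbs μ fun τ => ∑ i, w i * r i τ) (gibbs μ fun τ => ∑ i, w i * r i τ) = 0 :=
    sum_eq_zero fun τ _ => by rw [div_self (hpbar_pos τ).ne', log_one, mul_zero]
  refine ⟨hdecomp, fun pi hpi => ?_, fun pi hpi heq => ?_⟩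
  · rw [hdecomp pi hpi, hdecomp _ hpbar, hKL_self]
    linarith [KL_nonneg hpi hpbar hpbar_pos]
  · rw [hdecomp pi hpi, hdecomp _ hpbar, hKL_self] at heq
    exact eq_of_KL_eq_zero hpi hpbar hpbar_pos (by linarith)

/-- For convex weights `w` and `r̄ = ∑ i, w i · r i`, for every pmf `pi`:
`∑ i, w i · D(pi‖p_{r i}) = D(pi‖p_{r̄}) + ∑ i, w i · log Z_{r i} − log Z_{r̄}`;
consequently the weighted KL objective is minimized over pmfs exactly at `pi = p_{r̄}`,
and this minimizer is unique. -/
theorem weighted_kl_eq_kl_mix_and_unique_min {T : Type*} [Fintype T] [Nonempty T]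
    (μ : T → ℝ) (hμ : ∀ τ, 0 < μ τ)
    (k : ℕ) (r : Fin k → T → ℝ) (w : Fin k → ℝ)
    (hw0 : ∀ i, 0 ≤ w i) (hw1 : ∑ i, w i = 1)
    (rbar : T → ℝ) (hrbar : ∀ τ, rbar τ = ∑ i, w i * r i τ) :
    (∀ pi : T → ℝ, IsPMF pi →
        ∑ i, w i * KL pi (gibbs μ (r i)) =
          KL pi (gibbs μ rbar) + (∑ i, w i * Real.log (Z μ (r i))) - Real.log (Z μ rbar))
    ∧
    (∀ pi : T → ℝ, IsPMF pi →
        ∑ i, w i * KL (gibbs μ rbar) (gibbs μ (r i)) ≤ ∑ i, w i * KL pi (gibbs μ (r i)))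
    ∧
    (∀ pi : T → ℝ, IsPMF pi →
        ∑ i, w i * KL pi (gibbs μ (r i)) =
          ∑ i, w i * KL (gibbs μ rbar) (gibbs μ (r i)) → pi = gibbs μ rbar) :=
  weighted_kl_eq_kl_mix_and_unique_min_general μ hμ k r w hw1 rbar hrbar
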